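/- arXiv:2503.21016 — 8 statements merged into one kernel-verified Lean document; each statement's English description precedes it below -/
import Mathlib

section
/- For elements a, b in a universe with hash function h into [m], define rank(v,i) = (i - h(v)) mod m, and the priority relation at cell i: a >_i b iff rank(a,i) > rank(b,i), or rank(a,i) = rank(b,i) and a > b. If a >_i b and h(a) ≠ (i+1) mod m, then a >_{i+1} b. -/
/-- The rank of `v` at cell `i`: the cyclic distance `(i - h v) mod m`. -/
def rnk {U : Type*} {m : ℕ} (h : U → Fin m) (v : U) (i : Fin m) : ℕ :=
  ((i : ℕ) + m - (h v : ℕ)) % m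

/-- Robin Hood priority: `a >_i b` iff `rank(a,i) > rank(b,i)`, or equal ranks and `a > b`. -/
def prioGT {U : Type*} [LinearOrder U] {m : ℕ} (h : U → Fin m) (i : Fin m) (a b : U) : Prop :=
  rnk h a i > rnk h b i ∨ (rnk h a i = rnk h b i ∧ a > b)

lemma rnk_lt {U : Type*} {m : ℕ} [NeZero m] (h : U → Fin m) (v : U) (i : Fin m) :
    rnk h v i < m := Nat.mod_lt _ (Nat.pos_of_ne_zero (NeZero.ne m))

lemma rnk_succ {U : Type*} {m : ℕ} [NeZero m] (h : U → Fin m) (v : U) (i : Fin m) :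
    rnk h v (i + 1) = (rnk h v i + 1) % m := by
  have hv : (h v : ℕ) ≤ m := le_of_lt (h v).isLt
  have h1 : ((i + 1 : Fin m) : ℕ) = ((i : ℕ) + 1) % m := by
    simp [Fin.add_def]
  unfold rnk
  rw [h1, Nat.add_sub_assoc hv, Nat.mod_add_mod, Nat.add_sub_assoc hv, Nat.mod_add_mod,
    Nat.add_right_comm]

/-- If the rank of `v` at `i` is `m - 1`, then `h v = i + 1`. -/
lemma hv_eq_of_rnk_eq {U : Type*} {m : ℕ} [NeZero m] (h : U → Fin m) (v : U) (i : Fin m)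
    (hr : rnk h v i = m - 1) : h v = i + 1 := by
  have hv := (h v).isLt
  have hi := i.isLt
  have hm : 0 < m := Nat.pos_of_ne_zero (NeZero.ne m)
  unfold rnk at hr
  have hkey : (i : ℕ) + m - (h v : ℕ) = m - 1 ∨ (i : ℕ) + m - (h v : ℕ) = 2 * m - 1 := by
    rcases Nat.lt_or_ge ((i : ℕ) + m - (h v : ℕ)) m with hc | hc
    · left; rwa [Nat.mod_eq_of_lt hc] at hr
    · right
      have hlt : (i : ℕ) + m - (h v : ℕ) - m < m := by omega
      have h2 := Nat.mod_eq_sub_mod hc ▸ hr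
      rw [Nat.mod_eq_of_lt hlt] at h2
      omega
  apply Fin.ext
  rw [Fin.add_def]
  simp only [Fin.val_one']
  by_cases hm1 : m = 1
  · subst hm1; omega
  · have h1 : (1 : ℕ) % m = 1 := Nat.mod_eq_of_lt (by omega)
    rw [h1]
    rcases hkey with hk | hk
    · have hhv : (h v : ℕ) = (i : ℕ) + 1 := by omega
      rw [hhv, Nat.mod_eq_of_lt (by omega : (i : ℕ) + 1 < m)]
    · have hi1 : (i : ℕ) + 1 = m := by omega
      have hhv : (h v : ℕ) = 0 := by omega
      rw [hhv, hi1, Nat.mod_self]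

theorem stmt0 {U : Type*} [LinearOrder U] {m : ℕ} [NeZero m] (h : U → Fin m)
    (i : Fin m) (a b : U)
    (hab : prioGT h i a b) (hha : h a ≠ i + 1) :
    prioGT h (i + 1) a b := by
  have hm : 0 < m := Nat.pos_of_ne_zero (NeZero.ne m)
  have hra := rnk_lt h a i
  have hrb := rnk_lt h b i
  have hane : rnk h a i ≠ m - 1 := fun hc => hha (hv_eq_of_rnk_eq h a i hc)
  have hsa : rnk h a (i + 1) = rnk h a i + 1 := by
    rw [rnk_succ, Nat.mod_eq_of_lt (by omega)]
  rcases hab with hlt | ⟨heq, hgt⟩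
  · left
    rw [hsa, rnk_succ]
    have : (rnk h b i + 1) % m ≤ rnk h b i + 1 := Nat.mod_le _ _
    omega
  · right
    refine ⟨?_, hgt⟩
    have hbne : rnk h b i ≠ m - 1 := heq ▸ hane
    rw [hsa, rnk_succ, Nat.mod_eq_of_lt (by omega), heq]
end

section
/- For elements a, b with a >_i b (Robin Hood priority at cell i) and h(b) ≠ i, it holds that a >_{i-1} b, where cell indices are taken modulo m. -/
lemma rnk_sub_one {U : Type*} {m : ℕ} [NeZero m] (h : U → Fin m) (v : U) (i : Fin m) :
    rnk h v (i - 1) = (rnk h v i + (m - 1 % m)) % m := by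
  unfold rnk
  rw [Fin.sub_def]
  simp only [Fin.val_mk, Fin.val_one']
  have hv : (h v : ℕ) < m := (h v).isLt
  have h1 : 1 % m ≤ m := Nat.le_of_lt (Nat.mod_lt _ (Nat.pos_of_ne_zero (NeZero.ne m)))
  have e1 : (m - 1 % m + (i : ℕ)) % m + m - (h v : ℕ)
      = (m - 1 % m + (i : ℕ)) % m + (m - (h v : ℕ)) := by omega
  rw [e1, Nat.mod_add_mod]
  have e2 : m - 1 % m + (i : ℕ) + (m - (h v : ℕ))
      = ((i : ℕ) + m - (h v : ℕ)) + (m - 1 % m) := by omega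
  rw [e2, ← Nat.mod_add_mod]

lemma rnk_pred {U : Type*} {m : ℕ} [NeZero m] (h : U → Fin m) (v : U) (i : Fin m)
    (hm : 2 ≤ m) (hne : rnk h v i ≠ 0) :
    rnk h v (i - 1) = rnk h v i - 1 := by
  rw [rnk_sub_one]
  have hlt := rnk_lt h v i
  have h1 : 1 % m = 1 := Nat.mod_eq_of_lt hm
  rw [h1]
  have e : rnk h v i + (m - 1) = (rnk h v i - 1) + m := by omega
  rw [e, Nat.add_mod_right, Nat.mod_eq_of_lt (by omega)]

lemma rnk_ne_zero {U : Type*} {m : ℕ} [NeZero m] (h : U → Fin m) (v : U) (i : Fin m)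
    (hne : h v ≠ i) : rnk h v i ≠ 0 := by
  intro h0
  apply hne
  unfold rnk at h0
  obtain ⟨k, hk⟩ := Nat.dvd_of_mod_eq_zero h0
  have hv : (h v : ℕ) < m := (h v).isLt
  have hi : (i : ℕ) < m := i.isLt
  have hpos : 0 < m := Nat.pos_of_ne_zero (NeZero.ne m)
  have hub : m * k < m * 2 := hk ▸ (by omega)
  have hlb : 0 < m * k := hk ▸ (by omega)
  have hk2 : k < 2 := Nat.lt_of_mul_lt_mul_left hub
  have hk0 : k ≠ 0 := by rintro rfl; omega
  have hk1 : k = 1 := by omega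
  subst hk1
  have : (h v : ℕ) = (i : ℕ) := by omega
  exact Fin.ext this

theorem stmt1 {U : Type*} [LinearOrder U] {m : ℕ} [NeZero m] (h : U → Fin m)
    (i : Fin m) (a b : U)
    (hab : prioGT h i a b) (hhb : h b ≠ i) :
    prioGT h (i - 1) a b := by
  have hm : 2 ≤ m := by
    by_contra hm
    have hpos : 0 < m := Nat.pos_of_ne_zero (NeZero.ne m)
    have : m = 1 := by omega
    subst this
    exact hhb (Subsingleton.elim _ _)
  have hb0 : rnk h b i ≠ 0 := rnk_ne_zero h b i hhb
  have ha0 : rnk h a i ≠ 0 := by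
    rcases hab with h1 | ⟨h1, _⟩ <;> omega
  rw [prioGT, rnk_pred h a i hm ha0, rnk_pred h b i hm hb0]
  rcases hab with h1 | ⟨h1, h2⟩
  · left; omega
  · right; exact ⟨by omega, h2⟩
end

section
/- Suppose an array A : Fin m → Option U satisfies the ordering invariant: whenever A stores element v at cell i, then for every cell j on the cyclic interval from h(v) to i (exclusive of i), the element stored at j has priority at least that of v at cell j (where empty cells ⊥ have lowest priority). If the element stored at cell i has strictly higher priority than v at cell i, then for every cell j with h(v) ≤ j ≤ i (cyclically), the element stored at j has strictly higher priority than v at cell j. -/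
/-- Cyclic distance from `a` to `b`, going forward, modulo `m`. -/
def cdist {m : ℕ} (a b : Fin m) : ℕ :=
  ((b : ℕ) + m - (a : ℕ)) % m

/-- Priority extended to `Option U`: `none` is strictly below every `some v`. -/
def oGT {U : Type*} [LinearOrder U] {m : ℕ} (h : U → Fin m) (i : Fin m) :
    Option U → Option U → Prop
  | some a, some b => prioGT h i a b
  | some _, none => True
  | none, _ => False

/-- `x ≥_i y` : strictly higher priority, or equal. -/
def oGE {U : Type*} [LinearOrder U] {m : ℕ} (h : U → Fin m) (i : Fin m)
    (x y : Option U) : Prop :=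
  oGT h i x y ∨ x = y

/-- The Robin Hood ordering invariant: if `v` is stored at cell `i`, then every cell `j`
on the cyclic interval from `h v` to `i` (exclusive of `i`) stores a value of priority
at least that of `v` at cell `j`. -/
def OrdInv {U : Type*} [LinearOrder U] {m : ℕ} (h : U → Fin m) (A : Fin m → Option U) : Prop :=
  ∀ i v, A i = some v → ∀ j, cdist (h v) j < cdist (h v) i → oGE h j (A j) (some v)

lemma cdist_cases {m : ℕ} (a b : Fin m) :
    cdist a b = if (a:ℕ) ≤ (b:ℕ) then (b:ℕ) - a else (b:ℕ) + m - a := by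
  have ha := a.isLt; have hb := b.isLt
  unfold cdist
  split_ifs with hab
  · have : (b:ℕ) + m - a = (b - a) + m := by omega
    rw [this, Nat.add_mod_right, Nat.mod_eq_of_lt (by omega)]
  · rw [Nat.mod_eq_of_lt (by omega)]

lemma cdist_inj {m : ℕ} (a j i : Fin m) (hji : cdist a j = cdist a i) : j = i := by
  have ha := a.isLt; have hj := j.isLt; have hi := i.isLt
  rw [cdist_cases, cdist_cases] at hji
  apply Fin.ext
  split_ifs at hji <;> omega

lemma cdist_sub {m : ℕ} (b j i : Fin m) (hd : cdist j i ≤ cdist b i) :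
    cdist b j = cdist b i - cdist j i := by
  have hb := b.isLt; have hj := j.isLt; have hi := i.isLt
  rw [cdist_cases, cdist_cases, cdist_cases] at *
  split_ifs at * <;> omega

lemma cdist_jd {m : ℕ} (a j i : Fin m) (hd : cdist a j ≤ cdist a i) :
    cdist j i ≤ cdist a i ∧ cdist a j = cdist a i - cdist j i := by
  have ha := a.isLt; have hj := j.isLt; have hi := i.isLt
  rw [cdist_cases, cdist_cases, cdist_cases] at *
  split_ifs at * <;> omega

lemma rnk_eq_cdist {U : Type*} {m : ℕ} (h : U → Fin m) (v : U) (i : Fin m) :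
    rnk h v i = cdist (h v) i := rfl

theorem stmt3 {U : Type*} [LinearOrder U] {m : ℕ} (h : U → Fin m)
    (A : Fin m → Option U) (hinv : OrdInv h A) (i : Fin m) (v : U)
    (hi : oGT h i (A i) (some v)) :
    ∀ j : Fin m, cdist (h v) j ≤ cdist (h v) i → oGT h j (A j) (some v) := by
  intro j hj
  obtain ⟨w, hw⟩ : ∃ w, A i = some w := by
    cases hAi : A i with
    | none => rw [hAi] at hi; exact absurd hi (by simp [oGT])
    | some w => exact ⟨w, rfl⟩
  rw [hw] at hi
  change prioGT h i w v at hi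
  by_cases hji : j = i
  · subst hji; rw [hw]; exact hi
  · -- d := cdist j i
    obtain ⟨hd1, hd2⟩ := cdist_jd (h v) j i hj
    have hdpos : 0 < cdist j i := by
      rcases Nat.eq_zero_or_pos (cdist j i) with h0 | h0
      · exact absurd (cdist_inj (h v) j i (by omega)) hji
      · exact h0
    have hwv : rnk h v i ≤ rnk h w i := by
      rcases hi with h1 | ⟨h1, _⟩ <;> omega
    have hdw : cdist j i ≤ cdist (h w) i := by
      rw [rnk_eq_cdist, rnk_eq_cdist] at hwv; omega
    have hwj : cdist (h w) j = cdist (h w) i - cdist j i := cdist_sub _ _ _ hdw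
    have hvj : cdist (h v) j = cdist (h v) i - cdist j i := hd2
    have hlt : cdist (h w) j < cdist (h w) i := by omega
    have hinvw := hinv i w hw j hlt
    -- A j ≥_j some w, and w >_j v, conclude
    obtain ⟨u, hu⟩ : ∃ u, A j = some u := by
      cases hAj : A j with
      | none => rw [hAj] at hinvw; rcases hinvw with h1 | h1 <;> simp [oGT] at h1
      | some u => exact ⟨u, rfl⟩
    rw [hu] at hinvw ⊢
    have hwvj : prioGT h j w v := by
      rcases hi with h1 | ⟨h1, h2⟩
      · have h1' : cdist (h w) i > cdist (h v) i := h1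
        exact Or.inl (show cdist (h w) j > cdist (h v) j by omega)
      · have h1' : cdist (h w) i = cdist (h v) i := h1
        exact Or.inr ⟨show cdist (h w) j = cdist (h v) j by omega, h2⟩
    change prioGT h j u v
    rcases hinvw with huw | huw
    · change prioGT h j u w at huw
      rcases huw with h1 | ⟨h1, h2⟩ <;> rcases hwvj with h3 | ⟨h3, h4⟩ <;>
        [skip; skip; skip; exact Or.inr ⟨by rw [h1, h3], lt_trans h4 h2⟩] <;>
      · have h1' : cdist (h u) j ≥ cdist (h w) j := by
          first
          | exact le_of_lt h1
          | exact le_of_eq h1.symm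
        have h3' : cdist (h w) j ≥ cdist (h v) j := by
          first
          | exact le_of_lt h3
          | exact le_of_eq h3.symm
        have hne : cdist (h u) j ≠ cdist (h v) j ∨ cdist (h u) j > cdist (h v) j := by
          first
          | exact Or.inr (lt_of_lt_of_le h3 h1')
          | exact Or.inr (lt_of_le_of_lt h3' h1)
        exact Or.inl (show cdist (h u) j > cdist (h v) j by
          rcases hne with hne | hne
          · omega
          · exact hne)
    · have : u = w := by injection huw
      subst this; exact hwvj
end

section
/- Let A : Fin m → Option U satisfy the ordering invariant for Robin Hood hashing, and suppose at least one cell of A is empty (equals none). If A i = some u and A ((i+1) mod m) = some v with h(v) ≠ (i+1) mod m, then rank(u, i) ≥ rank(v, i). -/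
lemma cdist_lt_succ {m : ℕ} [NeZero m] (a i : Fin m) (hne : a ≠ i + 1) :
    cdist a i < cdist a (i + 1) := by
  have hm : 0 < m := Nat.pos_of_ne_zero (NeZero.ne m)
  have hia : (i : ℕ) < m := i.isLt
  have haa : (a : ℕ) < m := a.isLt
  have hsucc : ((i + 1 : Fin m) : ℕ) = ((i : ℕ) + 1) % m := by
    simp [Fin.add_def]
  have h2 : cdist a (i + 1) = (cdist a i + 1) % m := by
    unfold cdist
    conv_rhs => rw [Nat.mod_add_mod]
    rw [hsucc]
    rcases Nat.lt_or_ge ((i : ℕ) + 1) m with hc | hc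
    · rw [Nat.mod_eq_of_lt hc]
      congr 1
      omega
    · have hi : (i : ℕ) + 1 = m := by omega
      rw [hi, Nat.mod_self]
      have : (i : ℕ) + m - (a : ℕ) + 1 = m + (m - (a : ℕ)) := by omega
      rw [this, Nat.add_mod_left]
      congr 1
      omega
  have h3 : cdist a i < m := Nat.mod_lt _ hm
  rcases Nat.lt_or_ge (cdist a i + 1) m with hlt | hge
  · rw [h2, Nat.mod_eq_of_lt hlt]; omega
  · exfalso
    have : cdist a i = m - 1 := by omega
    have h0 : cdist a (i + 1) = 0 := by
      rw [h2, this]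
      have hm1 : m - 1 + 1 = m := by omega
      rw [hm1, Nat.mod_self]
    unfold cdist at h0
    have hb : ((i + 1 : Fin m) : ℕ) < m := (i+1).isLt
    obtain ⟨k, hk⟩ := Nat.dvd_of_mod_eq_zero h0
    have : ((i + 1 : Fin m) : ℕ) = (a : ℕ) := by
      rcases k with _ | _ | k
      · omega
      · omega
      · have : m * (k + 1 + 1) ≥ 2 * m := by nlinarith
        omega
    exact hne (Fin.ext this.symm)

theorem stmt4 {U : Type*} [LinearOrder U] {m : ℕ} [NeZero m] (h : U → Fin m)
    (A : Fin m → Option U) (hinv : OrdInv h A)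
    (hempty : ∃ e : Fin m, A e = none)
    (i : Fin m) (u v : U)
    (hu : A i = some u) (hv : A (i + 1) = some v) (hhv : h v ≠ i + 1) :
    rnk h v i ≤ rnk h u i := by
  have hlt : cdist (h v) i < cdist (h v) (i + 1) := cdist_lt_succ _ _ hhv
  have := hinv (i + 1) v hv i hlt
  rw [hu] at this
  rcases this with hgt | heq
  · rcases hgt with h1 | ⟨h2, _⟩
    · exact le_of_lt h1
    · exact le_of_eq h2.symm
  · simp_all
end

section
/- Two arrays A, B : Fin m → Option U that both satisfy the Robin Hood ordering invariant and store the same multiset of elements are equal (unique representability of Robin Hood hashing). -/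
/-- The multiset of elements stored in the table `A` (counted with multiplicity). -/
def elemsOf {U : Type*} {m : ℕ} (A : Fin m → Option U) : Multiset U :=
  ((List.ofFn A).filterMap id : List U)

/-!
An element is never stored past the first empty cell after its home. Hence two tables with the
same elements have the same empty cells: if `e` is empty in `A` but not in `B`, the window from the
last empty cell of `B` before `e` up to `e` is filled, in `B`, by elements homed in it, while in `A`
these elements must fit into the window minus `e`. Now scan forward from a common empty cell and let
`i` be the first cell where the tables disagree, say `A i = a` and `B i = b`. As the earlier cells
agree, `a` must occur in `B` at a later cell `p`, with its home before `i`; the invariant of `B` at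
`p` gives `b >ᵢ a`. By symmetry also `a >ᵢ b`.
-/

open Finset

section CyclicDistance

variable {m : ℕ}

lemma cdist_eq_ite (a b : Fin m) :
    cdist a b = if (a : ℕ) ≤ b then (b : ℕ) - a else (b : ℕ) + m - a := by
  have := a.isLt; have := b.isLt
  unfold cdist
  split_ifs
  · rw [show (b : ℕ) + m - a = (b - a) + m by omega, Nat.add_mod_right, Nat.mod_eq_of_lt (by omega)]
  · rw [Nat.mod_eq_of_lt (by omega)]

lemma cdist_lt (a b : Fin m) : cdist a b < m :=
  Nat.mod_lt _ a.pos

@[simp]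
lemma cdist_self (a : Fin m) : cdist a a = 0 := by
  simp [cdist]

lemma cdist_injective (a : Fin m) : Function.Injective (cdist a) := by
  intro b c hbc
  have := a.isLt; have := b.isLt; have := c.isLt
  rw [cdist_eq_ite, cdist_eq_ite] at hbc
  ext
  split_ifs at hbc <;> omega

lemma cdist_eq_zero {a b : Fin m} : cdist a b = 0 ↔ a = b := by
  rw [← cdist_self a, (cdist_injective a).eq_iff, eq_comm]

lemma cdist_add_cdist (a b c : Fin m) :
    cdist a b + cdist b c = cdist a c ∨ cdist a b + cdist b c = cdist a c + m := by
  have := a.isLt; have := b.isLt; have := c.isLt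
  simp only [cdist_eq_ite]
  split_ifs <;> omega

end CyclicDistance

section Counting

variable {U : Type*} {m : ℕ}

open Classical in
lemma countP_elemsOf (A : Fin m → Option U) (P : U → Prop) [DecidablePred P] :
    (elemsOf A).countP P = #{i | ∃ v, A i = some v ∧ P v} := by
  rw [← card_val, filter_val, ← Multiset.countP_eq_card_filter, elemsOf,
    ← Multiset.filterMap_coe, ← Fin.univ_val_map, Multiset.filterMap_map, Function.id_comp]
  induction (univ : Finset (Fin m)).val using Multiset.induction with
  | empty => simp
  | cons i s ih => cases hi : A i <;> simp [hi, ih, Multiset.countP_cons]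

lemma exists_eq_none_of_card_elemsOf_lt {A : Fin m → Option U}
    (hcard : Multiset.card (elemsOf A) < m) : ∃ e, A e = none := by
  classical
  by_contra! hfull
  have hall : #{i | ∃ v, A i = some v ∧ True} = m := by
    simp [Option.ne_none_iff_exists'.mp (hfull _)]
  rw [← countP_elemsOf, Multiset.countP_True] at hall
  omega

end Counting

lemma exists_le_of_card_fiber_eq {ι β : Type*} [Fintype ι] [DecidableEq β]
    (r : ι → ℕ) {f g : ι → β} {i : ι} {x : β} (hagree : ∀ q, r q < r i → f q = g q)
    (hfi : f i = x) (hgi : g i ≠ x) (hcard : #{q | f q = x} = #{q | g q = x}) :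
    ∃ p, g p = x ∧ r i ≤ r p := by
  by_contra! hbelow
  have hsub : ({q | g q = x} : Finset ι) ⊂ ({q | f q = x} : Finset ι) := by
    refine (ssubset_iff_of_subset fun q hq => ?_).mpr ⟨i, by simpa using hfi, by simpa using hgi⟩
    rw [mem_filter] at hq ⊢
    exact ⟨mem_univ q, (hagree q (hbelow q hq.2)).trans hq.2⟩
  exact (card_lt_card hsub).ne hcard.symm

section RobinHood

variable {U : Type*} [LinearOrder U] {m : ℕ} {h : U → Fin m}

lemma prioGT_asymm {i : Fin m} {a b : U} (hab : prioGT h i a b) (hba : prioGT h i b a) : False := by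
  rcases hab with hab | ⟨hab, hab'⟩ <;> rcases hba with hba | ⟨hba, hba'⟩
  · omega
  · omega
  · omega
  · exact lt_asymm hab' hba'

lemma oGE_some_some {i : Fin m} {a b : U} : oGE h i (some a) (some b) ↔ prioGT h i a b ∨ a = b := by
  simp [oGE, oGT]

lemma not_oGE_none_some {i : Fin m} {b : U} : ¬ oGE h i none (some b) := by
  simp [oGE, oGT]

variable {A B : Fin m → Option U}

lemma OrdInv.cdist_lt_of_eq_none (hA : OrdInv h A) {p e : Fin m} {v : U} (hp : A p = some v)
    (he : A e = none) : cdist (h v) p < cdist (h v) e := by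
  refine lt_of_le_of_ne (not_lt.mp fun hlt => not_oGE_none_some (he ▸ hA p v hp e hlt)) ?_
  rintro hpe
  rw [cdist_injective _ hpe, he] at hp
  exact Option.some_ne_none v hp.symm

lemma OrdInv.eq_none_of_eq_none (hA : OrdInv h A) (hB : OrdInv h B) (hsame : elemsOf A = elemsOf B)
    (hBempty : ∃ e, B e = none) {e : Fin m} (he : A e = none) : B e = none := by
  classical
  by_contra hBe
  -- `eB` is the last empty cell of `B` before `e`
  obtain ⟨eB, heB, hmin⟩ := exists_min_image {k | B k = none} (cdist · e)
    (by simpa [Finset.Nonempty] using hBempty)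
  simp only [mem_filter, mem_univ, true_and] at heB hmin
  set W : Finset (Fin m) := {k | 0 < cdist eB k ∧ cdist eB k ≤ cdist eB e}
  have heW : e ∈ W := by
    simp only [W, mem_filter, mem_univ, true_and, le_rfl, and_true, Nat.pos_iff_ne_zero]
    exact fun h' => hBe (cdist_eq_zero.mp h' ▸ heB)
  have hBfull : W ⊆ ({k | ∃ v, B k = some v ∧ h v ∈ W} : Finset (Fin m)) := by
    intro k hk
    simp only [W, mem_filter, mem_univ, true_and] at hk ⊢
    have hocc : B k ≠ none := fun hk' => by
      have := hmin k hk'; have := cdist_add_cdist eB k e; have := cdist_lt k e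
      omega
    obtain ⟨v, hv⟩ := Option.ne_none_iff_exists'.mp hocc
    have := hB.cdist_lt_of_eq_none hv heB
    have := cdist_add_cdist eB (h v) k; have := cdist_add_cdist (h v) eB (h v)
    have := cdist_lt eB k; have := cdist_lt eB (h v); have := cdist_lt (h v) eB
    simp only [cdist_self] at *
    exact ⟨v, hv, by omega, by omega⟩
  have hAsparse : ({k | ∃ v, A k = some v ∧ h v ∈ W} : Finset (Fin m)) ⊆ W.erase e := by
    intro p hp
    rw [mem_erase]
    simp only [W, mem_filter, mem_univ, true_and] at hp ⊢
    obtain ⟨v, hv, hv₁, hv₂⟩ := hp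
    have := hA.cdist_lt_of_eq_none hv he
    have := cdist_add_cdist eB (h v) e; have := cdist_add_cdist eB (h v) p
    have := cdist_lt (h v) e; have := cdist_lt eB e
    refine ⟨fun hpe => ?_, by omega, by omega⟩
    rw [hpe, he] at hv
    exact Option.some_ne_none v hv.symm
  have hcount : #{k | ∃ v, A k = some v ∧ h v ∈ W} = #{k | ∃ v, B k = some v ∧ h v ∈ W} := by
    rw [← countP_elemsOf, ← countP_elemsOf, hsame]
  have := card_le_card hBfull
  have := card_le_card hAsparse
  rw [card_erase_of_mem heW] at this
  have := card_pos.mpr ⟨e, heW⟩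
  omega

lemma OrdInv.prioGT_of_first_mismatch (hA : OrdInv h A) (hB : OrdInv h B) {e i : Fin m} {a b : U}
    (heA : A e = none) (heB : B e = none) (hia : A i = some a) (hib : B i = some b) (hab : a ≠ b)
    (hagree : ∀ j, cdist e j < cdist e i → A j = B j)
    (hcount : #{q | A q = some a} = #{q | B q = some a}) : prioGT h i b a := by
  obtain ⟨p, hpa, hle⟩ := exists_le_of_card_fiber_eq (cdist e) hagree hia
    (by simpa [hib] using hab.symm) hcount
  have hpi : p ≠ i := by rintro rfl; rw [hib] at hpa; exact hab (Option.some.inj hpa).symm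
  have hip : cdist e i < cdist e p := hle.lt_of_ne fun h' => hpi (cdist_injective e h').symm
  have hhome : cdist (h a) i < cdist (h a) p := by
    have := hA.cdist_lt_of_eq_none hia heA; have := hB.cdist_lt_of_eq_none hpa heB
    have := cdist_add_cdist (h a) i e; have := cdist_add_cdist (h a) p e
    have := cdist_add_cdist i e i; have := cdist_add_cdist p e p
    have := cdist_lt i e; have := cdist_lt p e
    simp only [cdist_self] at *
    omega
  have := hB p a hpa i hhome
  rw [hib, oGE_some_some] at this
  exact this.resolve_right (Ne.symm hab)

lemma OrdInv.apply_eq_of_eqOn_before (hA : OrdInv h A) (hB : OrdInv h B)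
    (hcount : ∀ c, #{q | A q = some c} = #{q | B q = some c}) {e i : Fin m} (heA : A e = none)
    (heB : B e = none) (hagree : ∀ j, cdist e j < cdist e i → A j = B j)
    (hnone : A i = none ↔ B i = none) : A i = B i := by
  rcases hia : A i with _ | a <;> rcases hib : B i with _ | b
  · rfl
  · simp [hia, hib] at hnone
  · simp [hia, hib] at hnone
  · rw [Option.some.injEq]
    by_contra hab
    exact prioGT_asymm (hA.prioGT_of_first_mismatch hB heA heB hia hib hab hagree (hcount a))
      (hB.prioGT_of_first_mismatch hA heB heA hib hia (Ne.symm hab) (fun j hj => (hagree j hj).symm)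
        (hcount b).symm)

end RobinHood

theorem stmt5 {U : Type*} [LinearOrder U] {m : ℕ} (h : U → Fin m)
    (A B : Fin m → Option U) (hA : OrdInv h A) (hB : OrdInv h B)
    (hsame : elemsOf A = elemsOf B)
    (hcard : Multiset.card (elemsOf A) < m) :
    A = B := by
  have hcardB : Multiset.card (elemsOf B) < m := hsame ▸ hcard
  have hnone : ∀ i, A i = none ↔ B i = none := fun i =>
    ⟨hA.eq_none_of_eq_none hB hsame (exists_eq_none_of_card_elemsOf_lt hcardB),
      hB.eq_none_of_eq_none hA hsame.symm (exists_eq_none_of_card_elemsOf_lt hcard)⟩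
  have hcount : ∀ c, #{q | A q = some c} = #{q | B q = some c} := fun c => by
    simpa [countP_elemsOf] using congrArg (Multiset.countP (· = c)) hsame
  obtain ⟨e, heA⟩ := exists_eq_none_of_card_elemsOf_lt hcard
  funext i
  induction i using (measure (cdist e)).wf.induction with
  | _ i ih => exact hA.apply_eq_of_eqOn_before hB hcount heA ((hnone e).mp heA) ih (hnone i)
end

section
/- Consider a canonical assignment can : Q → (Fin m → M) from dictionary states (finite subsets of a universe U of size at most n) to memory representations, where each memory cell stores a value in M. Suppose can is natural with k bits of metadata: M = (Option U) × (Fin (2^k)), and for each state q, every cell's first component is either ⊥ or an element of q, and every element of q appears as the first component of some cell. If m·t < u where u = |U|, and (t+2)·2^k < ∑_{ℓ=0}^{min(t+1,n)} C(t+1, ℓ), then there exists an element v ∈ U and, for every cell index ℓ < m, states q, q' ∈ Q with v ∈ q, v ∉ q', and can(q)[ℓ] = can(q')[ℓ]. -/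
/-!
Suppose every `v` has a cell `ℓ v` at which no state containing `v` agrees with one avoiding `v`.
As `m * t < u`, some cell `ℓ` is `ℓ v` for every `v` in a set `S` of `t + 1` elements. The
content of `ℓ` then determines a state among the subsets of `S` of size at most `n`, and by
naturality that content lies in `(S ∪ {⊥}) × Fin (2 ^ k)`; hence `∑ C(t + 1, j) ≤ (t + 2) * 2 ^ k`.
-/

open Finset

theorem Finset.card_filter_powerset_card_le {α : Type*} (S : Finset α) (n : ℕ) :
    #{A ∈ S.powerset | #A ≤ n} = ∑ j ∈ range (min #S n + 1), (#S).choose j := by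
  rw [card_eq_sum_card_fiberwise (f := card) (t := range (min #S n + 1))]
  · refine sum_congr rfl fun j hj => ?_
    rw [mem_range] at hj
    rw [← card_powersetCard, powersetCard_eq_filter, filter_filter]
    exact congrArg card (filter_congr fun A _ => by omega)
  · intro A hA
    rw [mem_coe, mem_filter, mem_powerset] at hA
    have := card_le_card hA.1
    rw [mem_coe, mem_range]
    omega

section Natural

variable {U β : Type*} {n : ℕ}

def CellSeparates (c : {q : Finset U // #q ≤ n} → β) (v : U) : Prop :=
  ∀ q q' : {q : Finset U // #q ≤ n}, v ∈ q.1 → v ∉ q'.1 → c q ≠ c q'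

theorem injOn_of_cellSeparates {c : {q : Finset U // #q ≤ n} → β} {S : Finset U}
    (hS : ∀ v ∈ S, CellSeparates c v) : Set.InjOn c {q | q.1 ⊆ S} := by
  intro q hq q' hq' hqq'
  by_contra hne
  obtain ⟨v, hv, hv'⟩ | ⟨v, hv, hv'⟩ :
      (∃ v ∈ q.1, v ∉ q'.1) ∨ (∃ v ∈ q'.1, v ∉ q.1) := by
    by_contra! h
    exact hne (Subtype.ext (Subset.antisymm h.1 h.2))
  · exact hS v (hq hv) q q' hv hv' hqq'
  · exact hS v (hq' hv) q' q hv hv' hqq'.symm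

theorem sum_choose_le_of_cellSeparates [Fintype β]
    {c : {q : Finset U // #q ≤ n} → Option U × β}
    (hnat : ∀ q a, (c q).1 = some a → a ∈ q.1) {S : Finset U}
    (hS : ∀ v ∈ S, CellSeparates c v) :
    ∑ j ∈ range (min #S n + 1), (#S).choose j ≤ (#S + 1) * Fintype.card β := by
  classical
  have hmaps : ∀ q ∈ S.powerset.subtype (#· ≤ n), c q ∈ S.insertNone ×ˢ (univ : Finset β) := by
    intro q hq
    rw [mem_subtype, mem_powerset] at hq
    simp only [mem_product, mem_insertNone, mem_univ, and_true]
    exact fun a ha => hq (hnat q a (Option.mem_def.mp ha))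
  have hinj : Set.InjOn c (S.powerset.subtype (#· ≤ n)) :=
    (injOn_of_cellSeparates hS).mono fun q hq => mem_powerset.mp (mem_subtype.mp hq)
  have hcard := card_le_card_of_injOn c hmaps hinj
  rwa [card_subtype, card_filter_powerset_card_le, card_product, card_insertNone, card_univ]
    at hcard

end Natural

theorem stmt6_general (U : Type*) [Fintype U] (u n m k t : ℕ)
    (hu : Fintype.card U = u)
    (can : {q : Finset U // q.card ≤ n} → Fin m → Option U × Fin (2 ^ k))
    -- naturality: each cell's first component is ⊥ or an element of the state
    (hnat1 : ∀ q ℓ a, (can q ℓ).1 = some a → a ∈ q.1)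
    (hmt : m * t < u)
    (hcount : (t + 2) * 2 ^ k <
      ∑ ℓ ∈ Finset.range (min (t + 1) n + 1), Nat.choose (t + 1) ℓ) :
    ∃ v : U, ∀ ℓ : Fin m, ∃ q q' : {q : Finset U // q.card ≤ n},
      v ∈ q.1 ∧ v ∉ q'.1 ∧ can q ℓ = can q' ℓ := by
  classical
  by_contra! hcon
  choose cell hcell using hcon
  obtain ⟨ℓ, hℓ⟩ := Fintype.exists_lt_card_fiber_of_mul_lt_card cell (by simpa [hu] using hmt)
  obtain ⟨S, hSℓ, hS⟩ := exists_subset_card_eq hℓ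
  have hsep : ∀ v ∈ S, CellSeparates (can · ℓ) v := fun v hv =>
    (mem_filter.mp (hSℓ hv)).2 ▸ hcell v
  have hle := sum_choose_le_of_cellSeparates (fun q => hnat1 q ℓ) hsep
  rw [hS, Fintype.card_fin] at hle
  exact (hcount.trans_le hle).false

theorem stmt6 (U : Type*) [Fintype U] [DecidableEq U] (u n m k t : ℕ)
    (hu : Fintype.card U = u) (hn : 2 ≤ n)
    (can : {q : Finset U // q.card ≤ n} → Fin m → Option U × Fin (2 ^ k))
    -- naturality: each cell's first component is ⊥ or an element of the state
    (hnat1 : ∀ q ℓ a, (can q ℓ).1 = some a → a ∈ q.1)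
    -- naturality: each element of the state appears in some cell
    (hnat2 : ∀ q, ∀ a ∈ q.1, ∃ ℓ, (can q ℓ).1 = some a)
    (hmt : m * t < u)
    (hcount : (t + 2) * 2 ^ k <
      ∑ ℓ ∈ Finset.range (min (t + 1) n + 1), Nat.choose (t + 1) ℓ) :
    ∃ v : U, ∀ ℓ : Fin m, ∃ q q' : {q : Finset U // q.card ≤ n},
      v ∈ q.1 ∧ v ∉ q'.1 ∧ can q ℓ = can q' ℓ :=
  stmt6_general U u n m k t hu can hnat1 hmt hcount
end

section
/- Consider a natural assignment (no metadata, k = 0) can : Q → (Fin m → Option U) for the state space Q of a dictionary holding at most n ≥ 2 elements from a universe U with m < |U| cells. Then there exists an element v ∈ U such that for every cell ℓ there are states q, q' with v ∈ q, v ∉ q', and can(q)[ℓ] = can(q')[ℓ] (Property 1 of the lower bound). -/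
/-
If the claim failed, every element v would own a cell ℓ = f v whose content separates the states
containing v from those avoiding it. Comparing with the empty state, cell f v of the state {v}
must hold v. For v ≠ w with f v = f w, that cell of the state {v, w} can hold neither ⊥ (compare
with ∅), nor v (compare with {v}), nor w (compare with {w}). So f : U → Fin m is injective,
contradicting m < |U|.
-/

namespace NaturalAssignment

abbrev State (U : Type*) (n : ℕ) := {q : Finset U // q.card ≤ n}

variable {U ι : Type*} {n : ℕ} {can : State U n → ι → Option U}

def IsNatural (can : State U n → ι → Option U) : Prop :=
  ∀ q ℓ a, can q ℓ = some a → a ∈ q.1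

def Separates (can : State U n → ι → Option U) (v : U) (ℓ : ι) : Prop :=
  ∀ q q' : State U n, v ∈ q.1 → v ∉ q'.1 → can q ℓ ≠ can q' ℓ

theorem IsNatural.eq_none_of_eq_empty (hnat : IsNatural can) (q : State U n) (hq : q.1 = ∅)
    (ℓ : ι) : can q ℓ = none :=
  Option.eq_none_iff_forall_ne_some.2 fun a ha => by simpa [hq] using hnat q ℓ a ha

theorem IsNatural.eq_some_of_separates (hnat : IsNatural can) {v : U} {ℓ : ι}
    (hsep : Separates can v ℓ) (q : State U n) (hq : q.1 = {v}) : can q ℓ = some v := by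
  obtain ⟨a, ha⟩ := Option.ne_none_iff_exists'.1 fun h =>
    hsep q ⟨∅, by simp⟩ (by simp [hq]) (Finset.notMem_empty v)
      (h.trans (hnat.eq_none_of_eq_empty _ rfl ℓ).symm)
  have hav : a = v := by simpa [hq] using hnat q ℓ a ha
  rw [ha, hav]

theorem IsNatural.eq_of_separates [DecidableEq U] (hnat : IsNatural can) (hn : 2 ≤ n)
    {v w : U} {ℓ : ι} (hv : Separates can v ℓ) (hw : Separates can w ℓ) : v = w := by
  by_contra hne
  have hsingle (x : U) : ({x} : Finset U).card ≤ n := by simp; omega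
  let pair : State U n := ⟨{v, w}, Finset.card_le_two.trans hn⟩
  have h_ne_none : can pair ℓ ≠ none :=
    hnat.eq_none_of_eq_empty ⟨∅, by simp⟩ rfl ℓ ▸
      hv pair ⟨∅, by simp⟩ (by simp [pair]) (Finset.notMem_empty v)
  have h_ne_v : can pair ℓ ≠ some v :=
    hnat.eq_some_of_separates hv ⟨{v}, hsingle v⟩ rfl ▸
      hw pair ⟨{v}, hsingle v⟩ (by simp [pair]) (by simpa using Ne.symm hne)
  have h_ne_w : can pair ℓ ≠ some w :=
    hnat.eq_some_of_separates hw ⟨{w}, hsingle w⟩ rfl ▸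
      hv pair ⟨{w}, hsingle w⟩ (by simp [pair]) (by simpa using hne)
  obtain ⟨a, ha⟩ := Option.ne_none_iff_exists'.1 h_ne_none
  have hmem : a = v ∨ a = w := by simpa [pair] using hnat pair ℓ a ha
  rcases hmem with rfl | rfl
  exacts [h_ne_v ha, h_ne_w ha]

end NaturalAssignment

open NaturalAssignment in
theorem stmt7_general (U : Type*) [Fintype U] [DecidableEq U] (n m : ℕ)
    (hn : 2 ≤ n) (hm : m < Fintype.card U)
    (can : {q : Finset U // q.card ≤ n} → Fin m → Option U)
    -- naturality: each cell is ⊥ or an element of the state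
    (hnat1 : ∀ q ℓ a, can q ℓ = some a → a ∈ q.1) :
    ∃ v : U, ∀ ℓ : Fin m, ∃ q q' : {q : Finset U // q.card ≤ n},
      v ∈ q.1 ∧ v ∉ q'.1 ∧ can q ℓ = can q' ℓ := by
  by_contra! h
  choose f hf using h
  have hinj : Function.Injective f := fun v w hvw =>
    IsNatural.eq_of_separates hnat1 hn (hf v) (hvw ▸ hf w)
  have hcard : Fintype.card U ≤ m := by simpa using Fintype.card_le_of_injective f hinj
  omega

theorem stmt7 (U : Type*) [Fintype U] [DecidableEq U] (n m : ℕ)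
    (hn : 2 ≤ n) (hm : m < Fintype.card U)
    (can : {q : Finset U // q.card ≤ n} → Fin m → Option U)
    -- naturality: each cell is ⊥ or an element of the state
    (hnat1 : ∀ q ℓ a, can q ℓ = some a → a ∈ q.1)
    -- naturality: each element of the state appears in some cell
    (hnat2 : ∀ q, ∀ a ∈ q.1, ∃ ℓ, can q ℓ = some a) :
    ∃ v : U, ∀ ℓ : Fin m, ∃ q q' : {q : Finset U // q.card ≤ n},
      v ∈ q.1 ∧ v ∉ q'.1 ∧ can q ℓ = can q' ℓ :=
  stmt7_general U n m hn hm can hnat1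
end

section
/- Let can be a natural assignment with k-bit metadata for a (u, m)-dictionary (states are subsets of U of size at most m, and m < u). If for element v Property 1 holds (for every cell ℓ there exist states q ∋ v and q' ∌ v with can(q)[ℓ] = can(q')[ℓ]), then Property 2 also holds for v: for every cell ℓ there exist states q₁, q₁' both containing v with can(q₁)[ℓ] ≠ can(q₁')[ℓ], and states q₂, q₂' both not containing v with can(q₂)[ℓ] ≠ can(q₂')[ℓ]. -/
/-!
A state of size exactly `m` fills all `m` cells with its elements, while the empty state leaves
every cell `⊥`. Comparing a full state avoiding `v` with the empty state gives the second half.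
For the first half, Property 1 provides `q ∋ v` whose cell `ℓ` agrees with that of some `q' ∌ v`,
so this cell of `q` is not `v`; it therefore differs from cell `ℓ` of a full state that contains `v`
but not the element stored there.
-/

open Finset

theorem exists_mem_eq_some_of_card_le {ι α : Type*} [Fintype ι] [DecidableEq α]
    (f : ι → Option α) (s : Finset α) (hs : ∀ a ∈ s, ∃ i, f i = some a)
    (hcard : Fintype.card ι ≤ #s) (i : ι) : ∃ a ∈ s, f i = some a := by
  have hsub : s.map Function.Embedding.some ⊆ univ.image f := by
    intro x hx
    obtain ⟨a, ha, rfl⟩ := mem_map.1 hx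
    simpa using hs a ha
  have heq : s.map Function.Embedding.some = univ.image f :=
    eq_of_subset_of_card_le hsub <| by
      rw [card_map]
      exact card_image_le.trans (card_univ.trans_le hcard)
  obtain ⟨a, ha, hfa⟩ := mem_map.1 (heq ▸ mem_image_of_mem f (mem_univ i))
  exact ⟨a, ha, hfa.symm⟩

theorem exists_card_eq_mem_of_notMem_option {α : Type*} [Fintype α] [DecidableEq α]
    {o : Option α} {a : α} (ha : a ∉ o) {n : ℕ} (hn₀ : 1 ≤ n) (hn : n < Fintype.card α) :
    ∃ s : Finset α, #s = n ∧ a ∈ s ∧ ∀ b ∈ o, b ∉ s := by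
  have hao : ({a} : Finset α) ⊆ univ \ o.toFinset := by simpa using ha
  have hcard : n ≤ #(univ \ o.toFinset) := by
    rw [card_sdiff_of_subset (subset_univ _), card_univ, Option.card_toFinset]
    cases o <;> simp <;> omega
  obtain ⟨s, has, hs, hsn⟩ := exists_subsuperset_card_eq hao (by simpa using hn₀) hcard
  refine ⟨s, hsn, singleton_subset_iff.1 has, fun b hb hbs => ?_⟩
  simpa [hb] using hs hbs

theorem stmt8 (U : Type*) [Fintype U] [DecidableEq U] (m k : ℕ)
    (hm : m < Fintype.card U)
    (can : {q : Finset U // q.card ≤ m} → Fin m → Option U × Fin (2 ^ k))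
    -- naturality of the first component: ⊥ or an element of the state
    (hnat1 : ∀ q ℓ a, (can q ℓ).1 = some a → a ∈ q.1)
    -- naturality: each element of the state appears in some cell
    (hnat2 : ∀ q, ∀ a ∈ q.1, ∃ ℓ, (can q ℓ).1 = some a)
    (v : U)
    -- Property 1 for v
    (hprop1 : ∀ ℓ : Fin m, ∃ q q' : {q : Finset U // q.card ≤ m},
      v ∈ q.1 ∧ v ∉ q'.1 ∧ can q ℓ = can q' ℓ) :
    -- Property 2 for v
    ∀ ℓ : Fin m,
      (∃ q₁ q₁' : {q : Finset U // q.card ≤ m},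
        v ∈ q₁.1 ∧ v ∈ q₁'.1 ∧ can q₁ ℓ ≠ can q₁' ℓ) ∧
      (∃ q₂ q₂' : {q : Finset U // q.card ≤ m},
        v ∉ q₂.1 ∧ v ∉ q₂'.1 ∧ can q₂ ℓ ≠ can q₂' ℓ) := by
  intro ℓ
  have full_cell (S : Finset U) (hS : #S = m) : ∃ a ∈ S, (can ⟨S, hS.le⟩ ℓ).1 = some a :=
    exists_mem_eq_some_of_card_le (fun l => (can ⟨S, hS.le⟩ l).1) S (hnat2 ⟨S, hS.le⟩)
      (by simp [hS]) ℓ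
  have empty_cell : (can ⟨∅, by simp⟩ ℓ).1 = none :=
    Option.eq_none_iff_forall_ne_some.2 fun a h => by simpa using hnat1 _ ℓ a h
  refine ⟨?_, ?_⟩
  · obtain ⟨q, q', hvq, hvq', hcell⟩ := hprop1 ℓ
    have hv_cell : v ∉ (can q ℓ).1 := fun h => hvq' (hnat1 q' ℓ v (hcell ▸ h))
    obtain ⟨S, hS, hvS, hS_avoid⟩ := exists_card_eq_mem_of_notMem_option hv_cell ℓ.pos hm
    refine ⟨⟨S, hS.le⟩, q, hvS, hvq, fun h => ?_⟩
    obtain ⟨a, haS, ha⟩ := full_cell S hS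
    exact hS_avoid a (h ▸ ha) haS
  · obtain ⟨S, hS_sub, hS⟩ := exists_subset_card_eq (s := univ.erase v) (n := m)
      (by rw [card_erase_of_mem (mem_univ v), card_univ]; omega)
    refine ⟨⟨S, hS.le⟩, ⟨∅, by simp⟩, fun h => by simpa using hS_sub h, by simp, fun h => ?_⟩
    obtain ⟨a, -, ha⟩ := full_cell S hS
    simp [h, empty_cell] at ha
end
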